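/- Commutator of the perturbed transport operator with the radial vertical field (Lemma 3.1, third identity): for every smooth f(t,x,v), [𝐓_φ, W] f = (1/v⁰)·𝐞_0 f − 𝐓_φ f − 2 (∂_{xⁱ}φ)·V_i f. -/

import Mathlib

noncomputable section

/-- Phase space point `(t, x, v)`. -/
abbrev Pt : Type := ℝ × (Fin 3 → ℝ) × (Fin 3 → ℝ)

/-- `v⁰ = √(1+|v|²)`. -/
def vzero (v : Fin 3 → ℝ) : ℝ := Real.sqrt (1 + ∑ i, (v i) ^ 2)

/-- Vertical derivative `V_i f = ∂_{vⁱ} f`. -/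
def Vop (i : Fin 3) (f : Pt → ℝ) (p : Pt) : ℝ :=
  fderiv ℝ f p ((0 : ℝ), (0 : Fin 3 → ℝ), Pi.single i 1)

/-- `W f = vⁱ ∂_{vⁱ} f`. -/
def Wop (f : Pt → ℝ) (p : Pt) : ℝ := ∑ i, p.2.2 i * Vop i f p

/-- Derivative of a function of `(t,x)` in the constant spacetime direction `d`. -/
def Dphi (φ : ℝ × (Fin 3 → ℝ) → ℝ) (d : ℝ × (Fin 3 → ℝ)) (q : ℝ × (Fin 3 → ℝ)) : ℝ :=
  fderiv ℝ φ q d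

/-- `𝐓(φ) = v⁰ ∂_t φ + vⁱ ∂_{xⁱ} φ`, evaluated at a phase-space point. -/
def TphiFn (φ : ℝ × (Fin 3 → ℝ) → ℝ) (p : Pt) : ℝ :=
  vzero p.2.2 * Dphi φ ((1 : ℝ), (0 : Fin 3 → ℝ)) (p.1, p.2.1) +
    ∑ i, p.2.2 i * Dphi φ ((0 : ℝ), Pi.single i 1) (p.1, p.2.1)

/-- Free transport operator `𝐓 f = v⁰ ∂_t f + vⁱ ∂_{xⁱ} f`. -/
def Tfree (f : Pt → ℝ) (p : Pt) : ℝ :=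
  vzero p.2.2 * fderiv ℝ f p ((1 : ℝ), (0 : Fin 3 → ℝ), (0 : Fin 3 → ℝ)) +
    ∑ i, p.2.2 i * fderiv ℝ f p ((0 : ℝ), Pi.single i 1, (0 : Fin 3 → ℝ))

/-- Perturbed transport operator `𝐓_φ f = 𝐓 f − (𝐓(φ) vⁱ + ∂_{xⁱ}φ) ∂_{vⁱ} f`. -/
def Tpert (φ : ℝ × (Fin 3 → ℝ) → ℝ) (f : Pt → ℝ) (p : Pt) : ℝ :=
  Tfree f p -
    ∑ i, (TphiFn φ p * p.2.2 i + Dphi φ ((0 : ℝ), Pi.single i 1) (p.1, p.2.1)) * Vop i f p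

/-- Generalized translation `𝐞_d f = ∂_d f − (∂_d φ) · vⁱ ∂_{vⁱ} f` (spacetime direction `d`). -/
def eop (φ : ℝ × (Fin 3 → ℝ) → ℝ) (d : ℝ × (Fin 3 → ℝ)) (f : Pt → ℝ) (p : Pt) : ℝ :=
  fderiv ℝ f p (d.1, d.2, (0 : Fin 3 → ℝ)) - Dphi φ d (p.1, p.2.1) * Wop f p

/-- The coordinate direction `∂_{x^μ}`, `μ ∈ {0,1,2,3}`, with `x⁰ = t`. -/
def dir4 (μ : Fin 4) : ℝ × (Fin 3 → ℝ) :=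
  if _h : (μ : ℕ) = 0 then ((1 : ℝ), (0 : Fin 3 → ℝ))
  else ((0 : ℝ), Pi.single (⟨(μ : ℕ) - 1, by have := μ.isLt; omega⟩ : Fin 3) 1)


/-!
Both operators are derivations along vector fields on phase space: `𝐓_φ` along
`X = (v⁰, v, -(𝐓(φ) v + ∇ₓφ))` and `W` along the linear field `R = (0, 0, v)`. By the symmetry
of second derivatives, `[𝐓_φ, W] f = Df · [X, R]`, and since `R` is linear,
`[X, R] = R(X) - ∂_R X`, where `∂_R X` is the derivative of `X` along the dilation
`v ↦ (1 + s) v`. That derivative is elementary once one knows `∂_R v⁰ = |v|²/v⁰ = v⁰ - 1/v⁰`.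
-/

open VectorField

lemma vzero_pos (v : Fin 3 → ℝ) : 0 < vzero v := Real.sqrt_pos.2 (by positivity)

lemma sq_vzero (v : Fin 3 → ℝ) : vzero v ^ 2 = 1 + ∑ i, v i ^ 2 :=
  Real.sq_sqrt (by positivity)

lemma differentiable_vzero : Differentiable ℝ vzero := fun v =>
  (DifferentiableAt.sqrt (by fun_prop) (by positivity))

lemma hasDerivAt_vzero_add_smul_self (v : Fin 3 → ℝ) :
    HasDerivAt (fun s : ℝ => vzero (v + s • v)) (vzero v - (vzero v)⁻¹) 0 := by
  have hcurve : (fun s : ℝ => vzero (v + s • v))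
      = fun s => Real.sqrt (1 + (1 + s) ^ 2 * ∑ i, v i ^ 2) := by
    funext s
    simp only [vzero, Pi.add_apply, Pi.smul_apply, smul_eq_mul, Finset.mul_sum]
    congr 2
    exact Finset.sum_congr rfl fun i _ => by ring
  have hinner : HasDerivAt (fun s : ℝ => 1 + (1 + s) ^ 2 * ∑ i, v i ^ 2)
      (2 * ∑ i, v i ^ 2) 0 := by
    simpa using (((hasDerivAt_id (0 : ℝ)).const_add 1).pow 2).mul_const (∑ i, v i ^ 2)
      |>.const_add 1
  rw [hcurve]
  convert hinner.sqrt (by positivity) using 1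
  rw [show √(1 + (1 + 0) ^ 2 * ∑ i, v i ^ 2) = vzero v by simp [vzero]]
  have hv := (vzero_pos v).ne'
  field_simp
  linear_combination sq_vzero v

def spatialGrad (φ : ℝ × (Fin 3 → ℝ) → ℝ) (q : ℝ × (Fin 3 → ℝ)) : Fin 3 → ℝ :=
  fun i => Dphi φ ((0 : ℝ), Pi.single i 1) q

def transportField (φ : ℝ × (Fin 3 → ℝ) → ℝ) (p : Pt) : Pt :=
  (vzero p.2.2, p.2.2, -(TphiFn φ p • p.2.2 + spatialGrad φ (p.1, p.2.1)))

def radialField : Pt →L[ℝ] Pt :=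
  (ContinuousLinearMap.inr ℝ ℝ _).comp ((ContinuousLinearMap.inr ℝ _ _).comp
    ((ContinuousLinearMap.snd ℝ _ _).comp (ContinuousLinearMap.snd ℝ ℝ _)))

@[simp] lemma radialField_apply (p : Pt) : radialField p = (0, 0, p.2.2) := rfl

lemma ContinuousLinearMap.apply_prod_prod_eq_sum {ι M : Type*} [Fintype ι] [DecidableEq ι]
    [AddCommGroup M] [Module ℝ M] [TopologicalSpace M]
    (L : ℝ × (ι → ℝ) × (ι → ℝ) →L[ℝ] M) (a : ℝ) (x w : ι → ℝ) :
    L (a, x, w) = a • L (1, 0, 0) + ∑ i, x i • L (0, Pi.single i 1, 0)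
      + ∑ i, w i • L (0, 0, Pi.single i 1) := by
  have hsplit : ((a, x, w) : ℝ × (ι → ℝ) × (ι → ℝ))
      = a • (1, 0, 0) + ∑ i, x i • (0, Pi.single i 1, 0) + ∑ i, w i • (0, 0, Pi.single i 1) := by
    ext <;> simp [Prod.fst_sum, Prod.snd_sum, Finset.sum_apply, Pi.single_apply]
  rw [hsplit, map_add, map_add, map_smul, map_sum, map_sum]
  simp only [map_smul]

lemma Wop_eq_fderiv_radialField (f : Pt → ℝ) (p : Pt) :
    Wop f p = fderiv ℝ f p (radialField p) := by
  rw [radialField_apply, ContinuousLinearMap.apply_prod_prod_eq_sum]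
  simp [Wop, Vop]

lemma Tpert_eq_fderiv_transportField (φ : ℝ × (Fin 3 → ℝ) → ℝ) (f : Pt → ℝ) (p : Pt) :
    Tpert φ f p = fderiv ℝ f p (transportField φ p) := by
  rw [transportField, ContinuousLinearMap.apply_prod_prod_eq_sum]
  simp only [Tpert, Tfree, Vop, spatialGrad, Pi.neg_apply, Pi.add_apply, Pi.smul_apply,
    smul_eq_mul, neg_mul, Finset.sum_neg_distrib, ← sub_eq_add_neg]

lemma eop_eq_fderiv (φ : ℝ × (Fin 3 → ℝ) → ℝ) (d : ℝ × (Fin 3 → ℝ)) (f : Pt → ℝ) (p : Pt) :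
    eop φ d f p = fderiv ℝ f p ((d.1, d.2, 0) - Dphi φ d (p.1, p.2.1) • radialField p) := by
  rw [eop, Wop_eq_fderiv_radialField, map_sub, map_smul, smul_eq_mul]

lemma sum_Dphi_mul_Vop_eq_fderiv (φ : ℝ × (Fin 3 → ℝ) → ℝ) (f : Pt → ℝ) (p : Pt) :
    ∑ i, Dphi φ ((0 : ℝ), Pi.single i 1) (p.1, p.2.1) * Vop i f p
      = fderiv ℝ f p (0, 0, spatialGrad φ (p.1, p.2.1)) := by
  rw [ContinuousLinearMap.apply_prod_prod_eq_sum]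
  simp [Vop, spatialGrad]

lemma differentiable_transportField {φ : ℝ × (Fin 3 → ℝ) → ℝ} (hφ : ContDiff ℝ 2 φ) :
    Differentiable ℝ (transportField φ) := by
  have hDφ : Differentiable ℝ (fderiv ℝ φ) :=
    (hφ.fderiv_right (m := 1) le_rfl).differentiable one_ne_zero
  have hvz := differentiable_vzero
  unfold transportField TphiFn spatialGrad Dphi
  fun_prop

theorem Tpert_Wop_sub_Wop_Tpert_eq_fderiv_lieBracket {φ : ℝ × (Fin 3 → ℝ) → ℝ}
    (hφ : ContDiff ℝ 2 φ) {f : Pt → ℝ} (hf : ContDiff ℝ 2 f) (p : Pt) :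
    Tpert φ (Wop f) p - Wop (Tpert φ f) p
      = fderiv ℝ f p (lieBracket ℝ (transportField φ) radialField p) := by
  have hW : Wop f = fun q => fderiv ℝ f q (radialField q) :=
    funext (Wop_eq_fderiv_radialField f)
  have hT : Tpert φ f = fun q => fderiv ℝ f q (transportField φ q) :=
    funext (Tpert_eq_fderiv_transportField φ f)
  rw [Tpert_eq_fderiv_transportField, Wop_eq_fderiv_radialField, hW, hT]
  exact (fderiv_apply_lieBracket hf.contDiffAt (by simp) radialField.differentiableAt
    (differentiable_transportField hφ p)).symm

section Dilation

variable (φ : ℝ × (Fin 3 → ℝ) → ℝ) (p : Pt)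

lemma hasDerivAt_TphiFn_add_smul_radialField :
    HasDerivAt (fun s : ℝ => TphiFn φ (p + s • radialField p))
      (TphiFn φ p - Dphi φ (1, 0) (p.1, p.2.1) / vzero p.2.2) 0 := by
  have hcurve : (fun s : ℝ => TphiFn φ (p + s • radialField p))
      = fun s => vzero (p.2.2 + s • p.2.2) * Dphi φ (1, 0) (p.1, p.2.1)
          + ∑ i, (p.2.2 + s • p.2.2) i * Dphi φ (0, Pi.single i 1) (p.1, p.2.1) := by
    funext s
    simp [TphiFn]
  have hsum : HasDerivAt
      (fun s : ℝ => ∑ i, (p.2.2 + s • p.2.2) i * Dphi φ (0, Pi.single i 1) (p.1, p.2.1))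
      (∑ i, p.2.2 i * Dphi φ (0, Pi.single i 1) (p.1, p.2.1)) 0 := by
    refine HasDerivAt.fun_sum fun i _ => ?_
    simpa using (((hasDerivAt_id (0 : ℝ)).mul_const (p.2.2 i)).const_add (p.2.2 i)).mul_const
      (Dphi φ (0, Pi.single i 1) (p.1, p.2.1))
  rw [hcurve]
  refine (((hasDerivAt_vzero_add_smul_self p.2.2).mul_const _).fun_add hsum).congr_deriv ?_
  simp only [TphiFn]
  ring

lemma hasLineDerivAt_transportField_radialField :
    HasLineDerivAt ℝ (transportField φ)
      (vzero p.2.2 - (vzero p.2.2)⁻¹, p.2.2,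
        -((2 * TphiFn φ p - Dphi φ (1, 0) (p.1, p.2.1) / vzero p.2.2) • p.2.2)) p
      (radialField p) := by
  have hcurve : (fun s : ℝ => transportField φ (p + s • radialField p))
      = fun s => (vzero (p.2.2 + s • p.2.2), p.2.2 + s • p.2.2,
          -(TphiFn φ (p + s • radialField p) • (p.2.2 + s • p.2.2)
            + spatialGrad φ (p.1, p.2.1))) := by
    funext s
    simp [transportField]
  have hv : HasDerivAt (fun s : ℝ => p.2.2 + s • p.2.2) p.2.2 0 := by
    simpa using ((hasDerivAt_id (0 : ℝ)).smul_const p.2.2).const_add p.2.2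
  have hTv := (((hasDerivAt_TphiFn_add_smul_radialField φ p).fun_smul hv).add_const
    (spatialGrad φ (p.1, p.2.1))).fun_neg
  unfold HasLineDerivAt
  rw [hcurve]
  refine (hasDerivAt_vzero_add_smul_self p.2.2).prodMk (hv.prodMk (hTv.congr_deriv ?_))
  ext i
  simp
  ring

end Dilation

lemma lieBracket_transportField_radialField {φ : ℝ × (Fin 3 → ℝ) → ℝ} (hφ : ContDiff ℝ 2 φ)
    (p : Pt) :
    lieBracket ℝ (transportField φ) radialField p
      = (vzero p.2.2)⁻¹ • ((1, 0, 0) - Dphi φ (1, 0) (p.1, p.2.1) • radialField p)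
        - transportField φ p - (2 : ℝ) • (0, 0, spatialGrad φ (p.1, p.2.1)) := by
  have hradial : fderiv ℝ (transportField φ) p (radialField p) = _ :=
    ((differentiable_transportField hφ p).hasFDerivAt.hasLineDerivAt _).unique
      (hasLineDerivAt_transportField_radialField φ p)
  rw [lieBracket, radialField.fderiv, hradial]
  ext <;> simp [transportField]
  ring

/-- Lemma 3.1, third identity: `[𝐓_φ, W] f = (1/v⁰)·𝐞_0 f − 𝐓_φ f − 2(∂_{xⁱ}φ)·V_i f`. -/
theorem commutator_Tpert_W
    (φ : ℝ × (Fin 3 → ℝ) → ℝ) (hφ : ContDiff ℝ (⊤ : ℕ∞) φ)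
    (f : Pt → ℝ) (hf : ContDiff ℝ (⊤ : ℕ∞) f) (p : Pt) :
    Tpert φ (Wop f) p - Wop (Tpert φ f) p =
      (1 / vzero p.2.2) * eop φ ((1 : ℝ), (0 : Fin 3 → ℝ)) f p
        - Tpert φ f p
        - 2 * ∑ i, Dphi φ ((0 : ℝ), Pi.single i 1) (p.1, p.2.1) * Vop i f p := by
  have hφ2 : ContDiff ℝ 2 φ := hφ.of_le (WithTop.coe_le_coe.2 le_top)
  have hf2 : ContDiff ℝ 2 f := hf.of_le (WithTop.coe_le_coe.2 le_top)
  rw [Tpert_Wop_sub_Wop_Tpert_eq_fderiv_lieBracket hφ2 hf2,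
    lieBracket_transportField_radialField hφ2, eop_eq_fderiv, Tpert_eq_fderiv_transportField,
    sum_Dphi_mul_Vop_eq_fderiv]
  simp only [map_sub, map_smul, smul_eq_mul, one_div]
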